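/- Define μ on morphisms of C_m by: μ(a,x̄,i,j) = 1 if (a=0 and j=i) or (a=1 and j=i−2); μ(a,x̄,i,j) = −1 if (a=0 and j=i−1) or (a=1 and j=i−1); and μ(a,x̄,i,j) = 0 otherwise. Then μ is the two-sided convolution inverse of the zeta function of C_m: for every morphism f of C_m, the sum of μ(g) over all pairs of composable morphisms (g,h) with g∘h = f equals 1 if f is an identity morphism and 0 otherwise, and likewise the sum of μ(h) over all such pairs (g,h) with g∘h = f equals 1 if f is an identity morphism and 0 otherwise. -/
import Mathlib


/-- A (potential) morphism `(a, x̄, i, j)` of the category `C_m`: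
it goes from the object `(x̄, i)` to the object `(x̄ + ā, j)`. -/
structure CmMor (m : ℕ) where
  a : ℤ
  x : ZMod m
  i : ℤ
  j : ℤ
deriving DecidableEq

/-- `(a, x̄, i, j)` really is a morphism of `C_m`:
the objects `(x̄, i)`, `(x̄ + ā, j)` exist (`i, j ≤ 0`) and `0 ≤ a ≤ i - j`. -/
def CmValid (m : ℕ) (f : CmMor m) : Prop :=
  f.i ≤ 0 ∧ f.j ≤ 0 ∧ 0 ≤ f.a ∧ f.a ≤ f.i - f.j

/-- The source object of a morphism of `C_m`. -/
def CmSrc (m : ℕ) (f : CmMor m) : ZMod m × ℤ := (f.x, f.i)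

/-- The target object of a morphism of `C_m`. -/
def CmTgt (m : ℕ) (f : CmMor m) : ZMod m × ℤ := (f.x + (f.a : ZMod m), f.j)

/-- `g` may be composed after `f` (target of `f` = source of `g`). -/
def CmComposable (m : ℕ) (f g : CmMor m) : Prop :=
  g.x = f.x + (f.a : ZMod m) ∧ g.i = f.j

/-- The composite `g ∘ f` in `C_m`: `(b, ȳ, j, k) ∘ (a, x̄, i, j) = (a + b, x̄, i, k)`. -/
def CmComp (m : ℕ) (g f : CmMor m) : CmMor m :=
  ⟨f.a + g.a, f.x, f.i, g.j⟩

/-- The identity morphism `(0, x̄, i, i)` of the object `(x̄, i)` of `C_m`. -/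
def CmId (m : ℕ) (x : ZMod m) (i : ℤ) : CmMor m := ⟨0, x, i, i⟩

/-- The proposed Möbius function of the category `C_m`. -/
def muC (m : ℕ) (f : CmMor m) : ℤ :=
  if (f.a = 0 ∧ f.j = f.i) ∨ (f.a = 1 ∧ f.j = f.i - 2) then 1
  else if (f.a = 0 ∧ f.j = f.i - 1) ∨ (f.a = 1 ∧ f.j = f.i - 1) then -1
  else 0

lemma sum_supp {α : Type*} [DecidableEq α] (s T : Finset α) (F : α → ℤ)
    (h : ∀ x ∈ s, F x ≠ 0 → x ∈ T) :
    ∑ x ∈ s, F x = ∑ q ∈ T, if q ∈ s then F q else 0 := by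
  rw [← Finset.sum_filter, Finset.filter_mem_eq_inter]
  refine (Finset.sum_subset Finset.inter_subset_right ?_).symm
  intro x hx hnx
  by_contra hne
  exact hnx (Finset.mem_inter.mpr ⟨h x hx hne, hx⟩)

lemma sum4 {α : Type*} [DecidableEq α] (a b c d : α) (F : α → ℤ)
    (hab : a ≠ b) (hac : a ≠ c) (had : a ≠ d) (hbc : b ≠ c) (hbd : b ≠ d) (hcd : c ≠ d) :
    ∑ x ∈ ({a, b, c, d} : Finset α), F x = F a + F b + F c + F d := by
  rw [Finset.sum_insert (by simp [hab, hac, had]),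
    Finset.sum_insert (by simp [hbc, hbd]), Finset.sum_pair hcd]
  ring


/-- `μ` is the two-sided convolution inverse of the zeta function of `C_m`:
for every morphism `f` of `C_m`, summing `μ(g)` (resp. `μ(h)`) over the
(finitely many) pairs of composable morphisms `(g, h)` with `g ∘ h = f` gives
`1` if `f` is an identity morphism and `0` otherwise. -/
theorem stmt10 (m : ℕ) (hm : 1 < m) (f : CmMor m) (hf : CmValid m f)
    (S : Set (CmMor m × CmMor m))
    (hS : S = {p | CmValid m p.1 ∧ CmValid m p.2 ∧
      CmComposable m p.2 p.1 ∧ CmComp m p.1 p.2 = f})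
    (hfin : S.Finite) :
    (∑ p ∈ hfin.toFinset, muC m p.1) =
      (if f = CmId m f.x f.i then 1 else 0) ∧
    (∑ p ∈ hfin.toFinset, muC m p.2) =
      (if f = CmId m f.x f.i then 1 else 0) := by
  obtain ⟨A, X, I, J⟩ := f
  obtain ⟨hI, hJ, hA0, hAn⟩ := hf
  have hI' : I ≤ 0 := hI
  have hJ' : J ≤ 0 := hJ
  have hA0' : (0:ℤ) ≤ A := hA0
  have hAn' : A ≤ I - J := hAn
  clear hI hJ hA0 hAn
  have hmem : ∀ p : CmMor m × CmMor m, p ∈ hfin.toFinset ↔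
      (CmValid m p.1 ∧ CmValid m p.2 ∧ CmComposable m p.2 p.1 ∧
        CmComp m p.1 p.2 = CmMor.mk A X I J) := by
    intro p
    rw [Set.Finite.mem_toFinset, hS]
    exact Iff.rfl
  have hRHS : ((CmMor.mk A X I J) = CmId m X I) ↔ (A = 0 ∧ J = I) := by
    simp [CmId, CmMor.mk.injEq]
  constructor
  · -- First sum: μ(p.1)
    have hsupp : ∀ p ∈ hfin.toFinset, muC m p.1 ≠ 0 →
        p ∈ ({((⟨0, X + ((A : ℤ) : ZMod m), J, J⟩ : CmMor m), (⟨A, X, I, J⟩ : CmMor m)),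
              ((⟨1, X + ((A - 1 : ℤ) : ZMod m), J + 2, J⟩ : CmMor m), (⟨A - 1, X, I, J + 2⟩ : CmMor m)),
              ((⟨0, X + ((A : ℤ) : ZMod m), J + 1, J⟩ : CmMor m), (⟨A, X, I, J + 1⟩ : CmMor m)),
              ((⟨1, X + ((A - 1 : ℤ) : ZMod m), J + 1, J⟩ : CmMor m), (⟨A - 1, X, I, J + 1⟩ : CmMor m))}
          : Finset (CmMor m × CmMor m)) := by
      rintro ⟨⟨a1, x1, i1, j1⟩, ⟨a2, x2, i2, j2⟩⟩ hp hne
      rw [hmem] at hp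
      obtain ⟨hv1, hv2, ⟨hx, hi⟩, hcmp⟩ := hp
      simp only [CmComp, CmMor.mk.injEq] at hcmp
      obtain ⟨ha, hxx, hii, hjj⟩ := hcmp
      have hx' : x1 = x2 + ((a2 : ℤ) : ZMod m) := hx
      have hi' : i1 = j2 := hi
      simp only [Finset.mem_insert, Finset.mem_singleton, Prod.mk.injEq, CmMor.mk.injEq]
      simp only [muC] at hne
      split_ifs at hne with h1 h2
      · rcases h1 with ⟨ha1, hj1⟩ | ⟨ha1, hj1⟩
        · refine Or.inl ⟨⟨ha1, ?_, by omega, by omega⟩, by omega, hxx, hii, by omega⟩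
          rw [hx', hxx, show a2 = A by omega]
        · refine Or.inr (Or.inl ⟨⟨ha1, ?_, by omega, by omega⟩, by omega, hxx, hii, by omega⟩)
          rw [hx', hxx, show a2 = A - 1 by omega]
      · rcases h2 with ⟨ha1, hj1⟩ | ⟨ha1, hj1⟩
        · refine Or.inr (Or.inr (Or.inl ⟨⟨ha1, ?_, by omega, by omega⟩, by omega, hxx, hii, by omega⟩))
          rw [hx', hxx, show a2 = A by omega]
        · refine Or.inr (Or.inr (Or.inr ⟨⟨ha1, ?_, by omega, by omega⟩, by omega, hxx, hii, by omega⟩))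
          rw [hx', hxx, show a2 = A - 1 by omega]
      · exact absurd rfl hne
    rw [sum_supp hfin.toFinset _ _ hsupp,
      sum4 _ _ _ _ _
        (by simp [Prod.ext_iff, CmMor.mk.injEq] <;> omega)
        (by simp [Prod.ext_iff, CmMor.mk.injEq] <;> omega)
        (by simp [Prod.ext_iff, CmMor.mk.injEq] <;> omega)
        (by simp [Prod.ext_iff, CmMor.mk.injEq] <;> omega)
        (by simp [Prod.ext_iff, CmMor.mk.injEq] <;> omega)
        (by simp [Prod.ext_iff, CmMor.mk.injEq] <;> omega)]
    have m0 : ((⟨0, X + ((A : ℤ) : ZMod m), J, J⟩ : CmMor m), (⟨A, X, I, J⟩ : CmMor m))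
        ∈ hfin.toFinset := by
      rw [hmem]
      simp [CmValid, CmComposable, CmComp, CmMor.mk.injEq] <;> omega
    have m1 : ((⟨1, X + ((A - 1 : ℤ) : ZMod m), J + 2, J⟩ : CmMor m), (⟨A - 1, X, I, J + 2⟩ : CmMor m))
        ∈ hfin.toFinset ↔ (1 ≤ A ∧ A + 1 ≤ I - J) := by
      rw [hmem]
      simp [CmValid, CmComposable, CmComp, CmMor.mk.injEq] <;> omega
    have m2 : ((⟨0, X + ((A : ℤ) : ZMod m), J + 1, J⟩ : CmMor m), (⟨A, X, I, J + 1⟩ : CmMor m))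
        ∈ hfin.toFinset ↔ (A + 1 ≤ I - J) := by
      rw [hmem]
      simp [CmValid, CmComposable, CmComp, CmMor.mk.injEq] <;> omega
    have m3 : ((⟨1, X + ((A - 1 : ℤ) : ZMod m), J + 1, J⟩ : CmMor m), (⟨A - 1, X, I, J + 1⟩ : CmMor m))
        ∈ hfin.toFinset ↔ (1 ≤ A) := by
      rw [hmem]
      simp [CmValid, CmComposable, CmComp, CmMor.mk.injEq] <;> omega
    have v0 : muC m (⟨0, X + ((A : ℤ) : ZMod m), J, J⟩ : CmMor m) = 1 := by
      unfold muC; dsimp only; rw [if_pos (by omega)]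
    have v1 : muC m (⟨1, X + ((A - 1 : ℤ) : ZMod m), J + 2, J⟩ : CmMor m) = 1 := by
      unfold muC; dsimp only; rw [if_pos (by omega)]
    have v2 : muC m (⟨0, X + ((A : ℤ) : ZMod m), J + 1, J⟩ : CmMor m) = -1 := by
      unfold muC; dsimp only; rw [if_neg (by omega), if_pos (by omega)]
    have v3 : muC m (⟨1, X + ((A - 1 : ℤ) : ZMod m), J + 1, J⟩ : CmMor m) = -1 := by
      unfold muC; dsimp only; rw [if_neg (by omega), if_pos (by omega)]
    simp only [m0, m1, m2, m3, hRHS, v0, v1, v2, v3, if_true]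
    split_ifs <;> omega
  · -- Second sum: μ(p.2)
    have hsupp : ∀ p ∈ hfin.toFinset, muC m p.2 ≠ 0 →
        p ∈ ({((⟨A, X + ((0 : ℤ) : ZMod m), I, J⟩ : CmMor m), (⟨0, X, I, I⟩ : CmMor m)),
              ((⟨A - 1, X + ((1 : ℤ) : ZMod m), I - 2, J⟩ : CmMor m), (⟨1, X, I, I - 2⟩ : CmMor m)),
              ((⟨A, X + ((0 : ℤ) : ZMod m), I - 1, J⟩ : CmMor m), (⟨0, X, I, I - 1⟩ : CmMor m)),
              ((⟨A - 1, X + ((1 : ℤ) : ZMod m), I - 1, J⟩ : CmMor m), (⟨1, X, I, I - 1⟩ : CmMor m))}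
          : Finset (CmMor m × CmMor m)) := by
      rintro ⟨⟨a1, x1, i1, j1⟩, ⟨a2, x2, i2, j2⟩⟩ hp hne
      rw [hmem] at hp
      obtain ⟨hv1, hv2, ⟨hx, hi⟩, hcmp⟩ := hp
      simp only [CmComp, CmMor.mk.injEq] at hcmp
      obtain ⟨ha, hxx, hii, hjj⟩ := hcmp
      have hx' : x1 = x2 + ((a2 : ℤ) : ZMod m) := hx
      have hi' : i1 = j2 := hi
      simp only [Finset.mem_insert, Finset.mem_singleton, Prod.mk.injEq, CmMor.mk.injEq]
      simp only [muC] at hne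
      split_ifs at hne with h1 h2
      · rcases h1 with ⟨ha2, hj2⟩ | ⟨ha2, hj2⟩
        · refine Or.inl ⟨⟨by omega, ?_, by omega, hjj⟩, ha2, hxx, hii, by omega⟩
          rw [hx', hxx, ha2]
        · refine Or.inr (Or.inl ⟨⟨by omega, ?_, by omega, hjj⟩, ha2, hxx, hii, by omega⟩)
          rw [hx', hxx, ha2]
      · rcases h2 with ⟨ha2, hj2⟩ | ⟨ha2, hj2⟩
        · refine Or.inr (Or.inr (Or.inl ⟨⟨by omega, ?_, by omega, hjj⟩, ha2, hxx, hii, by omega⟩))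
          rw [hx', hxx, ha2]
        · refine Or.inr (Or.inr (Or.inr ⟨⟨by omega, ?_, by omega, hjj⟩, ha2, hxx, hii, by omega⟩))
          rw [hx', hxx, ha2]
      · exact absurd rfl hne
    rw [sum_supp hfin.toFinset _ _ hsupp,
      sum4 _ _ _ _ _
        (by simp [Prod.ext_iff, CmMor.mk.injEq] <;> omega)
        (by simp [Prod.ext_iff, CmMor.mk.injEq] <;> omega)
        (by simp [Prod.ext_iff, CmMor.mk.injEq] <;> omega)
        (by simp [Prod.ext_iff, CmMor.mk.injEq] <;> omega)
        (by simp [Prod.ext_iff, CmMor.mk.injEq] <;> omega)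
        (by simp [Prod.ext_iff, CmMor.mk.injEq] <;> omega)]
    have m0 : ((⟨A, X + ((0 : ℤ) : ZMod m), I, J⟩ : CmMor m), (⟨0, X, I, I⟩ : CmMor m))
        ∈ hfin.toFinset := by
      rw [hmem]
      simp [CmValid, CmComposable, CmComp, CmMor.mk.injEq] <;> omega
    have m1 : ((⟨A - 1, X + ((1 : ℤ) : ZMod m), I - 2, J⟩ : CmMor m), (⟨1, X, I, I - 2⟩ : CmMor m))
        ∈ hfin.toFinset ↔ (1 ≤ A ∧ A + 1 ≤ I - J) := by
      rw [hmem]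
      simp [CmValid, CmComposable, CmComp, CmMor.mk.injEq] <;> omega
    have m2 : ((⟨A, X + ((0 : ℤ) : ZMod m), I - 1, J⟩ : CmMor m), (⟨0, X, I, I - 1⟩ : CmMor m))
        ∈ hfin.toFinset ↔ (A + 1 ≤ I - J) := by
      rw [hmem]
      simp [CmValid, CmComposable, CmComp, CmMor.mk.injEq] <;> omega
    have m3 : ((⟨A - 1, X + ((1 : ℤ) : ZMod m), I - 1, J⟩ : CmMor m), (⟨1, X, I, I - 1⟩ : CmMor m))
        ∈ hfin.toFinset ↔ (1 ≤ A) := by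
      rw [hmem]
      simp [CmValid, CmComposable, CmComp, CmMor.mk.injEq] <;> omega
    have v0 : muC m (⟨0, X, I, I⟩ : CmMor m) = 1 := by
      unfold muC; dsimp only; rw [if_pos (by omega)]
    have v1 : muC m (⟨1, X, I, I - 2⟩ : CmMor m) = 1 := by
      unfold muC; dsimp only; rw [if_pos (by omega)]
    have v2 : muC m (⟨0, X, I, I - 1⟩ : CmMor m) = -1 := by
      unfold muC; dsimp only; rw [if_neg (by omega), if_pos (by omega)]
    have v3 : muC m (⟨1, X, I, I - 1⟩ : CmMor m) = -1 := by
      unfold muC; dsimp only; rw [if_neg (by omega), if_pos (by omega)]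
    simp only [m0, m1, m2, m3, hRHS, v0, v1, v2, v3, if_true]
    split_ifs <;> omega
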